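/- arXiv:2308.04609 — 4 statements merged into one kernel-verified Lean document; each statement's English description precedes it below -/
import Mathlib

section
/- For every integer k ≥ 2, every strong pseudo k-metric space is a pseudo k-metric space: if (X, d) satisfies nonnegativity, vanishing on non-distinct tuples, permutation invariance, and the strong simplex inequality, then d also satisfies the simplex inequality d(x_1,…,x_k) ≤ Σ_{i=1}^k d(x_1,…,x_{i−1},y,x_{i+1},…,x_k) for all x_1,…,x_k, y ∈ X. -/
open scoped BigOperators

/-- An alternating real-valued function on `j`-tuples of `X`
(a `(j-1)`-dimensional chain on the complete complex on `X`). -/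
def AltChain {X : Type*} {j : ℕ} (α : (Fin j → X) → ℝ) : Prop :=
  ∀ (π : Equiv.Perm (Fin j)) (x : Fin j → X),
    α (x ∘ π) = ((Equiv.Perm.sign π : ℤ) : ℝ) * α x

/-- The boundary operator: `(∂α)(y₁,…,y_j) = ∑_{x ∈ X} α(x, y₁, …, y_j)`. -/
noncomputable def bdry {X : Type*} [Fintype X] {j : ℕ}
    (α : (Fin (j + 1) → X) → ℝ) : (Fin j → X) → ℝ :=
  fun y => ∑ x : X, α (Fin.cons x y)

/-- The elementary chain `1_t`: value `sign π` on the reordering of `t` by `π`,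
and `0` on all other tuples. -/
noncomputable def unitChain {X : Type*} [DecidableEq X] {j : ℕ} (t : Fin j → X) :
    (Fin j → X) → ℝ :=
  fun s => ∑ π : Equiv.Perm (Fin j),
    if s = t ∘ π then ((Equiv.Perm.sign π : ℤ) : ℝ) else 0

/-- The coboundary operator:
`(δf)(x₁,…,x_{j+2}) = ∑ᵢ (-1)^(i+1) f(x₁,…,x̂ᵢ,…,x_{j+2})` (`0`-indexed sign `(-1)^i`). -/
noncomputable def cobdry {X : Type*} {j : ℕ}
    (f : (Fin (j + 1) → X) → ℝ) : (Fin (j + 2) → X) → ℝ :=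
  fun x => ∑ i : Fin (j + 2), (-1 : ℝ) ^ (i : ℕ) * f (x ∘ i.succAbove)

/-- A pseudo metric of arity `K` (a pseudo `K`-metric): nonnegative, vanishing on
non-injective tuples, permutation invariant, satisfying the simplex inequality. -/
structure IsPseudoMetric {X : Type*} (K : ℕ) (d : (Fin K → X) → ℝ) : Prop where
  nonneg : ∀ x, 0 ≤ d x
  eq_zero : ∀ x, ¬ Function.Injective x → d x = 0
  perm : ∀ (π : Equiv.Perm (Fin K)) (x), d (x ∘ π) = d x
  simplex : ∀ (x : Fin K → X) (y : X),
    d x ≤ ∑ i : Fin K, d (Function.update x i y)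

/-- A strong pseudo metric of arity `k + 1` (a strong pseudo `(k+1)`-metric).
The strong simplex inequality `d t ≤ ∑_τ |α(τ)| * d(τ)` (with the sum over
`(k+1)`-element subsets `τ` of `X`, each evaluated on any fixed ordering of `τ`)
is stated in the equivalent form `(k+1)! * d t ≤ ∑_s |α(s)| * d(s)` with the sum
over all `(k+1)`-tuples `s`: since `α` is alternating and `d` is permutation
invariant, the summand depends only on the underlying set of `s` (it vanishes on
tuples with repeated entries), and each `(k+1)`-element subset has exactly
`(k+1)!` orderings. -/
structure IsStrongPseudoMetric {X : Type*} [Fintype X] [DecidableEq X] (k : ℕ)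
    (d : (Fin (k + 1) → X) → ℝ) : Prop where
  nonneg : ∀ x, 0 ≤ d x
  eq_zero : ∀ x, ¬ Function.Injective x → d x = 0
  perm : ∀ (π : Equiv.Perm (Fin (k + 1))) (x), d (x ∘ π) = d x
  strong_simplex : ∀ t : Fin (k + 1) → X, Function.Injective t →
    ∀ α : (Fin (k + 1) → X) → ℝ, AltChain α → bdry α = bdry (unitChain t) →
      ((k + 1).factorial : ℝ) * d t ≤ ∑ s : Fin (k + 1) → X, |α s| * d s

/-- `(X, d)` is a coboundary metric of arity `k + 2` in `m` dimensions with respect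
to the norm `ν` on `ℝ^m`: there are chains `f 1, …, f m` on `(k+1)`-tuples (i.e.
`(k+2)-2`-dimensional chains for arity `k+2`) whose simultaneous coboundary
realizes `d` on injective tuples, and `d` vanishes on non-injective tuples. -/
def IsCoboundaryMetric {X : Type*} (k m : ℕ) (ν : (Fin m → ℝ) → ℝ)
    (d : (Fin (k + 2) → X) → ℝ) : Prop :=
  ∃ f : Fin m → ((Fin (k + 1) → X) → ℝ),
    (∀ i, AltChain (f i)) ∧
    (∀ x, Function.Injective x → d x = ν (fun i => cobdry (f i) x)) ∧
    (∀ x, ¬ Function.Injective x → d x = 0)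

/-- `ν` is a norm on `ℝ^m`. -/
structure IsNorm {m : ℕ} (ν : (Fin m → ℝ) → ℝ) : Prop where
  nonneg : ∀ x, 0 ≤ ν x
  eq_zero_iff : ∀ x, ν x = 0 ↔ x = 0
  homog : ∀ (c : ℝ) (x), ν (c • x) = |c| * ν x
  triangle : ∀ x y, ν (x + y) ≤ ν x + ν y

/-- The `ℓ_p` norm on `ℝ^m` for real `p`. -/
noncomputable def lpNorm (p : ℝ) {m : ℕ} (x : Fin m → ℝ) : ℝ :=
  (∑ i, |x i| ^ p) ^ (1 / p)

/-- The `ℓ_1` norm on `ℝ^m`. -/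
noncomputable def l1Norm {m : ℕ} (x : Fin m → ℝ) : ℝ := ∑ i, |x i|

/-- The `ℓ_2` (Euclidean) norm on `ℝ^m`. -/
noncomputable def l2Norm {m : ℕ} (x : Fin m → ℝ) : ℝ := Real.sqrt (∑ i, x i ^ 2)

/-- The `ℓ_∞` norm on `ℝ^m` (the sup norm, which is the norm of `Fin m → ℝ`). -/
noncomputable def linfNorm {m : ℕ} (x : Fin m → ℝ) : ℝ := ‖x‖

/- The apex extension of `d` (of arity `K`), with the apex being
`none : Option X` (a new element not in `X`): on an injective `(K+1)`-tuple
containing the apex in position `i` it is `d` of the tuple with position `i`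
removed, and it is `0` on all other tuples. -/
open Classical in
noncomputable def apexExt {X : Type*} {K : ℕ} (d : (Fin K → X) → ℝ) :
    (Fin (K + 1) → Option X) → ℝ := fun x =>
  if h : Function.Injective x ∧ ∃ i, x i = none then
    d (fun j =>
      Option.get (x ((Classical.choose h.2).succAbove j))
        (by
          rw [Option.isSome_iff_ne_none]
          intro hnone
          exact Fin.succAbove_ne (Classical.choose h.2) j
            (h.1 (hnone.trans (Classical.choose_spec h.2).symm))))
  else 0

/-- The `K`-dimensional volume of the simplex with vertices `y 0, …, y K` in `ℝ^m`:
`(1/K!) * √(det (AᵀA))` where `A` is the `m × K` matrix with columns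
`y i - y 0`, `i = 1, …, K`. -/
noncomputable def simplexVolume {m K : ℕ} (y : Fin (K + 1) → (Fin m → ℝ)) : ℝ :=
  (1 / (K.factorial : ℝ)) *
    Real.sqrt
      (Matrix.det
        (Matrix.of fun i j : Fin K =>
          ∑ l : Fin m, (y i.succ l - y 0 l) * (y j.succ l - y 0 l)))


section Helpers

variable {X : Type*} [DecidableEq X]

lemma unitChain_eq_det {n : ℕ} (t s : Fin n → X) :
    unitChain t s =
      Matrix.det (Matrix.of fun i j => if s i = t j then (1 : ℝ) else 0) := by
  have main : ∀ σ : Equiv.Perm (Fin n),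
      (if s = t ∘ ⇑(σ⁻¹) then ((Equiv.Perm.sign σ⁻¹ : ℤ) : ℝ) else 0)
        = ((Equiv.Perm.sign σ : ℤ) : ℝ)
            * ∏ i, (Matrix.of fun i j => if s i = t j then (1 : ℝ) else 0) (σ i) i := by
    intro σ
    simp only [Matrix.of_apply]
    simp only [Finset.prod_boole]
    rw [Equiv.Perm.sign_inv, mul_ite, mul_one, mul_zero]
    have hcond : (s = t ∘ ⇑(σ⁻¹)) ↔ ∀ i ∈ Finset.univ, s (σ i) = t i := by
      constructor
      · intro h i _
        rw [h]
        simp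
      · intro h
        funext j
        have := h (σ⁻¹ j) (Finset.mem_univ _)
        simpa using this
    by_cases hc : s = t ∘ ⇑(σ⁻¹)
    · rw [if_pos hc, if_pos (hcond.mp hc)]
    · rw [if_neg hc, if_neg fun h => hc (hcond.mpr h)]
  calc unitChain t s
      = ∑ σ : Equiv.Perm (Fin n),
          if s = t ∘ ⇑(σ⁻¹) then ((Equiv.Perm.sign σ⁻¹ : ℤ) : ℝ) else 0 :=
        (Equiv.sum_comp (Equiv.inv (Equiv.Perm (Fin n)))
          (fun π => if s = t ∘ π then ((Equiv.Perm.sign π : ℤ) : ℝ) else 0)).symm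
    _ = ∑ σ : Equiv.Perm (Fin n), ((Equiv.Perm.sign σ : ℤ) : ℝ)
          * ∏ i, (Matrix.of fun i j => if s i = t j then (1 : ℝ) else 0) (σ i) i :=
        Finset.sum_congr rfl fun σ _ => main σ
    _ = _ := (Matrix.det_apply' _).symm

lemma altChain_unitChain {n : ℕ} (t : Fin n → X) : AltChain (unitChain t) := by
  intro π s
  rw [unitChain_eq_det, unitChain_eq_det]
  rw [show (Matrix.of fun i j => if (s ∘ π) i = t j then (1 : ℝ) else 0)
      = (Matrix.of fun i j => if s i = t j then (1 : ℝ) else 0).submatrix π id from rfl]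
  rw [Matrix.det_permute]

lemma bdry_unitChain {X : Type*} [Fintype X] [DecidableEq X] {n : ℕ}
    (t : Fin (n + 1) → X) :
    bdry (unitChain t) = fun y =>
      ∑ j : Fin (n + 1), (-1 : ℝ) ^ (j : ℕ) * unitChain (t ∘ j.succAbove) y := by
  funext y
  show ∑ x : X, unitChain t (Fin.cons x y) = _
  have h : ∀ x : X, unitChain t (Fin.cons x y)
      = ∑ j : Fin (n + 1), (-1 : ℝ) ^ (j : ℕ) * (if x = t j then (1 : ℝ) else 0)
          * unitChain (t ∘ j.succAbove) y := by
    intro x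
    have hM : ∀ j : Fin (n + 1),
        ((Matrix.of fun i j' => if (Fin.cons x y : Fin (n + 1) → X) i = t j' then (1 : ℝ) else 0).submatrix
            Fin.succ j.succAbove)
          = Matrix.of fun i j' => if y i = (t ∘ j.succAbove) j' then (1 : ℝ) else 0 := by
      intro j
      funext i j'
      simp [Fin.cons_succ]
    rw [unitChain_eq_det, Matrix.det_succ_row_zero]
    refine Finset.sum_congr rfl fun j _ => ?_
    rw [hM j, ← unitChain_eq_det]
    simp [Fin.cons_zero]
  rw [Finset.sum_congr rfl fun x _ => h x, Finset.sum_comm]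
  refine Finset.sum_congr rfl fun j _ => ?_
  simp only [mul_ite, ite_mul, mul_one, mul_zero, zero_mul]
  rw [Finset.sum_ite_eq' Finset.univ (t j)]
  simp

lemma bdry_bdry {X : Type*} [Fintype X] {n : ℕ} (β : (Fin (n + 2) → X) → ℝ)
    (hβ : AltChain β) : bdry (bdry β) = 0 := by
  funext z
  show ∑ a : X, ∑ b : X, β (Fin.cons b (Fin.cons a z)) = 0
  have key : ∀ a b : X, β (Fin.cons b (Fin.cons a z)) = -β (Fin.cons a (Fin.cons b z)) := by
    intro a b
    have hswap : (Fin.cons b (Fin.cons a z) : Fin (n + 2) → X)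
        = (Fin.cons a (Fin.cons b z)) ∘ (Equiv.swap (0 : Fin (n + 2)) 1) := by
      funext i
      simp only [Function.comp_apply]
      refine Fin.cases ?_ (fun j => ?_) i
      · simp [Equiv.swap_apply_left]
      · refine Fin.cases ?_ (fun j2 => ?_) j
        · simp [Fin.succ_zero_eq_one, Equiv.swap_apply_right]
        · have h0 : (j2.succ.succ : Fin (n + 2)) ≠ 0 := Fin.succ_ne_zero _
          have h1 : (j2.succ.succ : Fin (n + 2)) ≠ 1 := by
            simp [Fin.ext_iff]
          rw [Equiv.swap_apply_of_ne_of_ne h0 h1]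
          simp [Fin.cons_succ]
    have hne : (0 : Fin (n + 2)) ≠ 1 := by simp [Fin.ext_iff]
    rw [hswap, hβ, Equiv.Perm.sign_swap hne]
    norm_num
  have hcomm := Finset.sum_comm (s := (Finset.univ : Finset X)) (t := Finset.univ)
    (f := fun a b => β (Fin.cons b (Fin.cons a z)))
  have hneg : ∑ a : X, ∑ b : X, β (Fin.cons b (Fin.cons a z))
      = -∑ a : X, ∑ b : X, β (Fin.cons b (Fin.cons a z)) := by
    nth_rewrite 1 [hcomm]
    rw [← Finset.sum_neg_distrib]
    refine Finset.sum_congr rfl fun a _ => ?_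
    rw [← Finset.sum_neg_distrib]
    exact Finset.sum_congr rfl fun b _ => key b a
  linarith

lemma unitChain_apply_comp {n : ℕ} {v : Fin n → X} (hv : Function.Injective v)
    (π : Equiv.Perm (Fin n)) :
    unitChain v (v ∘ π) = ((Equiv.Perm.sign π : ℤ) : ℝ) := by
  have h : ∀ ρ : Equiv.Perm (Fin n), (v ∘ π = v ∘ ρ) ↔ ρ = π := by
    intro ρ
    constructor
    · intro h
      exact Equiv.ext fun i => (hv (congrFun h i)).symm
    · rintro rfl; rfl
  rw [show unitChain v (v ∘ π) = ∑ ρ : Equiv.Perm (Fin n),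
      if v ∘ π = v ∘ ρ then ((Equiv.Perm.sign ρ : ℤ) : ℝ) else 0 from rfl]
  rw [Finset.sum_congr rfl fun ρ _ => if_congr (h ρ) rfl rfl]
  rw [Finset.sum_ite_eq' Finset.univ π]
  simp

lemma sum_abs_unitChain {X : Type*} [Fintype X] [DecidableEq X] {n : ℕ}
    {v : Fin n → X} (hv : Function.Injective v) (d : (Fin n → X) → ℝ)
    (hperm : ∀ (π : Equiv.Perm (Fin n)) (x), d (x ∘ π) = d x) :
    ∑ s : Fin n → X, |unitChain v s| * d s = (n.factorial : ℝ) * d v := by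
  classical
  have hinj : ∀ π ρ : Equiv.Perm (Fin n), v ∘ π = v ∘ ρ → π = ρ := by
    intro π ρ h
    exact Equiv.ext fun i => hv (congrFun h i)
  rw [← Finset.sum_subset
      (Finset.subset_univ (Finset.univ.image fun π : Equiv.Perm (Fin n) => v ∘ π))
      ?_]
  · rw [Finset.sum_image fun π _ ρ _ h => hinj π ρ h]
    have hterm : ∀ π : Equiv.Perm (Fin n), |unitChain v (v ∘ π)| * d (v ∘ π) = d v := by
      intro π
      rw [unitChain_apply_comp hv, hperm]
      have habs : |((Equiv.Perm.sign π : ℤ) : ℝ)| = 1 := by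
        rcases Int.units_eq_one_or (Equiv.Perm.sign π) with h | h <;> simp [h]
      rw [habs, one_mul]
    rw [Finset.sum_congr rfl fun π _ => hterm π, Finset.sum_const, nsmul_eq_mul]
    congr 1
    rw [Finset.card_univ, Fintype.card_perm, Fintype.card_fin]
  · intro s _ hs
    have hz : unitChain v s = 0 := by
      refine Finset.sum_eq_zero fun π _ => if_neg fun h => ?_
      exact hs (Finset.mem_image.mpr ⟨π, Finset.mem_univ _, h.symm⟩)
    rw [hz, abs_zero, zero_mul]

lemma cons_face_eq_update {n : ℕ} (x : Fin (n + 1) → X) (y : X) (j : Fin (n + 1)) :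
    ((Fin.cons y x : Fin (n + 2) → X) ∘ (Fin.succ j).succAbove) ∘ (Fin.cycleRange j)
      = Function.update x j y := by
  funext l
  simp only [Function.comp_apply]
  rcases lt_trichotomy l j with hlj | rfl | hlj
  · rw [Fin.cycleRange_of_lt hlj]
    have hval : ((l + 1 : Fin (n + 1)) : ℕ) = (l : ℕ) + 1 :=
      Fin.val_add_one_of_lt (lt_of_lt_of_le hlj (Fin.le_last j))
    have h1 : (Fin.succ j).succAbove (l + 1) = Fin.succ l := by
      rw [Fin.succAbove_of_castSucc_lt]
      · ext
        simp [hval]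
      · rw [Fin.lt_def]
        simp only [Fin.coe_castSucc, Fin.val_succ, hval]
        have : (l : ℕ) < (j : ℕ) := hlj
        omega
    rw [h1, Fin.cons_succ, Function.update_of_ne (ne_of_lt hlj)]
  · rw [Fin.cycleRange_self, Function.update_self]
    have h1 : (Fin.succ l).succAbove 0 = 0 := by
      rw [Fin.succAbove_of_castSucc_lt]
      · simp
      · simp [Fin.lt_def]
    rw [h1, Fin.cons_zero]
  · rw [Fin.cycleRange_of_gt hlj]
    have h1 : (Fin.succ j).succAbove l = Fin.succ l := by
      rw [Fin.succAbove_of_le_castSucc]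
      rw [Fin.le_def]
      simp only [Fin.coe_castSucc, Fin.val_succ]
      have : (j : ℕ) < (l : ℕ) := hlj
      omega
    rw [h1, Fin.cons_succ, Function.update_of_ne (ne_of_gt hlj)]

end Helpers
/-- For every integer `k ≥ 2` (here arity `k + 2` for `k : ℕ`),
every strong pseudo metric is a pseudo metric: it also satisfies the (weak)
simplex inequality. -/
theorem stmt_0 (k : ℕ) {X : Type*} [Fintype X] [DecidableEq X]
    (d : (Fin (k + 2) → X) → ℝ) (hd : IsStrongPseudoMetric (k + 1) d) :
    IsPseudoMetric (k + 2) d := by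
  refine ⟨hd.nonneg, hd.eq_zero, hd.perm, ?_⟩
  intro x y
  by_cases hx : Function.Injective x
  · by_cases hy : y ∈ Set.range x
    · obtain ⟨i, rfl⟩ := hy
      have hupd : Function.update x i (x i) = x := Function.update_eq_self i x
      calc d x = d (Function.update x i (x i)) := by rw [hupd]
        _ ≤ ∑ i' : Fin (k + 2), d (Function.update x i' (x i)) :=
          Finset.single_le_sum (f := fun i' => d (Function.update x i' (x i)))
            (fun i' _ => hd.nonneg _) (Finset.mem_univ i)
    · set u : Fin (k + 3) → X := Fin.cons y x with hu
      have huinj : Function.Injective u := Fin.cons_injective_iff.mpr ⟨hy, hx⟩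
      set α : (Fin (k + 2) → X) → ℝ :=
        fun s => ∑ j : Fin (k + 2),
          (-1 : ℝ) ^ (j : ℕ) * unitChain (u ∘ (Fin.succ j).succAbove) s with hα
      have hαalt : AltChain α := by
        intro π s
        simp only [hα]
        rw [Finset.mul_sum]
        refine Finset.sum_congr rfl fun j _ => ?_
        rw [altChain_unitChain _ π s]
        ring
      have hrepr : α = fun s => unitChain x s - bdry (unitChain u) s := by
        funext s
        simp only [bdry_unitChain]
        rw [Fin.sum_univ_succ]
        have h0 : u ∘ (0 : Fin (k + 3)).succAbove = x := by
          funext i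
          simp [hu, Fin.zero_succAbove, Fin.cons_succ]
        rw [h0]
        have hsign : ∀ j : Fin (k + 2),
            (-1 : ℝ) ^ ((Fin.succ j : Fin (k + 3)) : ℕ)
              * unitChain (u ∘ (Fin.succ j).succAbove) s
            = -((-1 : ℝ) ^ (j : ℕ) * unitChain (u ∘ (Fin.succ j).succAbove) s) := by
          intro j
          rw [Fin.val_succ, pow_succ]
          ring
        rw [Finset.sum_congr rfl fun j _ => hsign j, Finset.sum_neg_distrib]
        simp only [hα, Fin.val_zero, pow_zero, one_mul]
        ring
      have hαbdry : bdry α = bdry (unitChain x) := by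
        rw [hrepr]
        funext z
        show ∑ a : X, (unitChain x (Fin.cons a z) - bdry (unitChain u) (Fin.cons a z)) = _
        rw [Finset.sum_sub_distrib]
        have hzero : ∑ a : X, bdry (unitChain u) (Fin.cons a z) = 0 :=
          congrFun (bdry_bdry (unitChain u) (altChain_unitChain u)) z
        rw [hzero, sub_zero]
        rfl
      have hstrong : ((k + 2).factorial : ℝ) * d x ≤ ∑ s : Fin (k + 2) → X, |α s| * d s :=
        hd.strong_simplex x hx α hαalt hαbdry
      have hbound : ∑ s : Fin (k + 2) → X, |α s| * d s
          ≤ ((k + 2).factorial : ℝ) * ∑ i : Fin (k + 2), d (Function.update x i y) := by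
        have h1 : ∀ s, |α s| * d s
            ≤ ∑ j : Fin (k + 2), |unitChain (u ∘ (Fin.succ j).succAbove) s| * d s := by
          intro s
          rw [← Finset.sum_mul]
          refine mul_le_mul_of_nonneg_right ?_ (hd.nonneg s)
          calc |α s| ≤ ∑ j : Fin (k + 2),
              |(-1 : ℝ) ^ (j : ℕ) * unitChain (u ∘ (Fin.succ j).succAbove) s| :=
              Finset.abs_sum_le_sum_abs _ _
            _ = ∑ j : Fin (k + 2), |unitChain (u ∘ (Fin.succ j).succAbove) s| := by
              refine Finset.sum_congr rfl fun j _ => ?_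
              rw [abs_mul, abs_pow, abs_neg, abs_one, one_pow, one_mul]
        calc ∑ s : Fin (k + 2) → X, |α s| * d s
            ≤ ∑ s : Fin (k + 2) → X, ∑ j : Fin (k + 2),
                |unitChain (u ∘ (Fin.succ j).succAbove) s| * d s :=
              Finset.sum_le_sum fun s _ => h1 s
          _ = ∑ j : Fin (k + 2), ∑ s : Fin (k + 2) → X,
                |unitChain (u ∘ (Fin.succ j).succAbove) s| * d s := Finset.sum_comm
          _ = ∑ j : Fin (k + 2), ((k + 2).factorial : ℝ) * d (u ∘ (Fin.succ j).succAbove) :=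
              Finset.sum_congr rfl fun j _ =>
                sum_abs_unitChain (huinj.comp Fin.succAbove_right_injective) d hd.perm
          _ = ((k + 2).factorial : ℝ) * ∑ i : Fin (k + 2), d (Function.update x i y) := by
              rw [Finset.mul_sum]
              refine Finset.sum_congr rfl fun j _ => ?_
              congr 1
              rw [← cons_face_eq_update x y j, hd.perm]
      have hfact : (0 : ℝ) < ((k + 2).factorial : ℝ) := by
        exact_mod_cast Nat.factorial_pos (k + 2)
      exact le_of_mul_le_mul_left (le_trans hstrong hbound) hfact
  · rw [hd.eq_zero x hx]
    exact Finset.sum_nonneg fun i _ => hd.nonneg _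
end

section
/- Let X = {x_0, x_1, x_2, x_3, x_4, x_5} be a 6-element set and let S = {{x_0,x_1,x_4}, {x_0,x_3,x_4}, {x_1,x_2,x_5}, {x_1,x_4,x_5}, {x_0,x_2,x_3}, {x_2,x_3,x_5}, {x_3,x_4,x_5}}. Define d : X^3 → ℝ by d(x,y,z) = 0 if x, y, z are not all distinct, d(x,y,z) = 1 if {x,y,z} ∈ S, and d(x,y,z) = 10 otherwise. Then (X, d) is a 3-metric space (in particular it satisfies the simplex inequality) but (X, d) is not a strong pseudo 3-metric space, i.e., d violates the strong simplex inequality. -/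
open scoped BigOperators

/-- The set `S` of the seven triangles in the subdivision of `{x₀, x₁, x₂}`. -/
def subdivTriangles : Finset (Finset (Fin 6)) :=
  {{0, 1, 4}, {0, 3, 4}, {1, 2, 5}, {1, 4, 5}, {0, 2, 3}, {2, 3, 5}, {3, 4, 5}}

open Classical in
/-- `d(x,y,z) = 0` if `x, y, z` not all distinct, `1` if `{x,y,z} ∈ S`,
`10` otherwise. -/
noncomputable def dSubdiv : (Fin 3 → Fin 6) → ℝ := fun x =>
  if Function.Injective x then
    (if ({x 0, x 1, x 2} : Finset (Fin 6)) ∈ subdivTriangles then 1 else 10)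
  else 0


/-! ### Auxiliary integer-valued models and decidable facts -/

def triOK' (a b c : ℕ) : Bool :=
  (a,b,c) = (0,1,4) ∨ (a,b,c) = (0,3,4) ∨ (a,b,c) = (1,2,5) ∨ (a,b,c) = (1,4,5) ∨
  (a,b,c) = (0,2,3) ∨ (a,b,c) = (2,3,5) ∨ (a,b,c) = (3,4,5)

def sort3' (a b c : ℕ) : ℕ × ℕ × ℕ :=
  (min a (min b c), min (max a b) (min (max b c) (max a c)), max a (max b c))

/-- Integer arithmetic model of `dSubdiv`. -/
def dB (a b c : Fin 6) : ℤ :=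
  if a = b ∨ a = c ∨ b = c then 0 else
  (let (x, y, z) := sort3' a.val b.val c.val; if triOK' x y z then 1 else 10)

def sg' (a b : Fin 6) : ℤ := if a < b then 1 else if b < a then -1 else 0

def co' (p : ℕ × ℕ × ℕ) : ℤ :=
  if p = (0,1,4) then 1 else if p = (0,3,4) then -1 else if p = (1,2,5) then 1 else
  if p = (1,4,5) then -1 else if p = (0,2,3) then -1 else if p = (2,3,5) then 1 else
  if p = (3,4,5) then 1 else 0

/-- Integer model of the witness chain `α`. -/
def aZ (a b c : Fin 6) : ℤ := sg' a b * sg' b c * sg' a c * co' (sort3' a.val b.val c.val)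

/-- Integer model of `unitChain ![0,1,2]`. -/
def uZ (s : Fin 3 → Fin 6) : ℤ :=
  ∑ π : Equiv.Perm (Fin 3), if s = ![0,1,2] ∘ π then (Equiv.Perm.sign π : ℤ) else 0

/-- Integer copy of `dSubdiv` (with the canonical decidability instances). -/
def dZfull : (Fin 3 → Fin 6) → ℤ := fun x =>
  if Function.Injective x then
    (if ({x 0, x 1, x 2} : Finset (Fin 6)) ∈ subdivTriangles then 1 else 10)
  else 0

set_option maxRecDepth 40000
set_option maxHeartbeats 4000000

lemma dZfull_eq_dB : ∀ v : Fin 3 → Fin 6, dZfull v = dB (v 0) (v 1) (v 2) := by decide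

lemma dB_perm : ∀ (π : Equiv.Perm (Fin 3)) (x : Fin 3 → Fin 6),
    dB (x (π 0)) (x (π 1)) (x (π 2)) = dB (x 0) (x 1) (x 2) := by decide

lemma dB_simplex : ∀ (x : Fin 3 → Fin 6) (y : Fin 6),
    dB (x 0) (x 1) (x 2) ≤ ∑ i : Fin 3,
      dB (Function.update x i y 0) (Function.update x i y 1)
        (Function.update x i y 2) := by decide

lemma dB_nonneg : ∀ x : Fin 3 → Fin 6, 0 ≤ dB (x 0) (x 1) (x 2) := by decide

lemma dB_pos : ∀ x : Fin 3 → Fin 6, Function.Injective x →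
    0 < dB (x 0) (x 1) (x 2) := by decide

lemma aZ_alt : ∀ (π : Equiv.Perm (Fin 3)) (x : Fin 3 → Fin 6),
    aZ (x (π 0)) (x (π 1)) (x (π 2)) = (Equiv.Perm.sign π : ℤ) * aZ (x 0) (x 1) (x 2) := by
  decide

lemma aZ_bdry : ∀ y : Fin 2 → Fin 6,
    (∑ x : Fin 6, aZ x (y 0) (y 1)) = ∑ x : Fin 6, uZ (Fin.cons x y) := by decide

lemma aZ_total : (∑ s : Fin 3 → Fin 6,
    |aZ (s 0) (s 1) (s 2)| * dB (s 0) (s 1) (s 2)) = 42 := by decide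

lemma dB_t : dB 0 1 2 = 10 := by decide

lemma t_inj : Function.Injective (![0,1,2] : Fin 3 → Fin 6) := by decide

/-- Cast bridge between `dSubdiv` and `dB`. -/
lemma dCast (v : Fin 3 → Fin 6) : dSubdiv v = ((dB (v 0) (v 1) (v 2) : ℤ) : ℝ) := by
  rw [← dZfull_eq_dB]
  simp only [dSubdiv, dZfull]
  split_ifs <;> norm_num

/-- Cast bridge between `unitChain ![0,1,2]` and `uZ`. -/
lemma unitCast (s : Fin 3 → Fin 6) :
    unitChain (![0,1,2] : Fin 3 → Fin 6) s = ((uZ s : ℤ) : ℝ) := by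
  unfold unitChain uZ
  rw [Int.cast_sum]
  refine Finset.sum_congr rfl fun π _ => ?_
  split_ifs <;> simp

/-- `(Fin 6, dSubdiv)` is a 3-metric space (a pseudo 3-metric which
is positive on distinct triples), but it is not a strong pseudo 3-metric space. -/
theorem stmt_1 :
    IsPseudoMetric 3 dSubdiv ∧
      (∀ x : Fin 3 → Fin 6, Function.Injective x → 0 < dSubdiv x) ∧
      ¬ IsStrongPseudoMetric 2 dSubdiv := by
  classical
  set α : (Fin 3 → Fin 6) → ℝ := fun s => ((aZ (s 0) (s 1) (s 2) : ℤ) : ℝ) with hα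
  refine ⟨⟨?_, ?_, ?_, ?_⟩, ?_, ?_⟩
  · -- nonneg
    intro x
    rw [dCast]
    exact_mod_cast dB_nonneg x
  · -- eq_zero
    intro x hx
    simp only [dSubdiv]
    rw [if_neg hx]
  · -- perm
    intro π x
    rw [dCast, dCast]
    exact_mod_cast dB_perm π x
  · -- simplex
    intro x y
    calc dSubdiv x = ((dB (x 0) (x 1) (x 2) : ℤ) : ℝ) := dCast x
      _ ≤ ((∑ i : Fin 3, dB (Function.update x i y 0) (Function.update x i y 1)
            (Function.update x i y 2) : ℤ) : ℝ) := by exact_mod_cast dB_simplex x y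
      _ = ∑ i : Fin 3, dSubdiv (Function.update x i y) := by
          rw [Int.cast_sum]
          exact Finset.sum_congr rfl fun i _ => (dCast _).symm
  · -- positivity
    intro x hx
    rw [dCast]
    exact_mod_cast dB_pos x hx
  · -- not strong
    intro h
    have halt : AltChain α := by
      intro π x
      show ((aZ (x (π 0)) (x (π 1)) (x (π 2)) : ℤ) : ℝ) = _
      rw [aZ_alt π x]
      push_cast
      ring
    have hbd : bdry α = bdry (unitChain (![0,1,2] : Fin 3 → Fin 6)) := by
      funext y
      show (∑ x : Fin 6, α (Fin.cons x y)) = ∑ x : Fin 6, unitChain _ (Fin.cons x y)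
      calc (∑ x : Fin 6, α (Fin.cons x y))
          = ((∑ x : Fin 6, aZ x (y 0) (y 1) : ℤ) : ℝ) := by
            rw [Int.cast_sum]
            exact Finset.sum_congr rfl fun x _ => rfl
        _ = ((∑ x : Fin 6, uZ (Fin.cons x y) : ℤ) : ℝ) := by
            exact congrArg Int.cast (aZ_bdry y)
        _ = ∑ x : Fin 6, unitChain (![0,1,2] : Fin 3 → Fin 6) (Fin.cons x y) := by
            rw [Int.cast_sum]
            exact Finset.sum_congr rfl fun x _ => (unitCast _).symm
    have hineq := h.strong_simplex (![0,1,2] : Fin 3 → Fin 6) t_inj α halt hbd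
    have hL : dSubdiv (![0,1,2] : Fin 3 → Fin 6) = (10 : ℝ) := by
      rw [dCast]
      show ((dB 0 1 2 : ℤ) : ℝ) = 10
      rw [dB_t]
      norm_num
    have hR : (∑ s : Fin 3 → Fin 6, |α s| * dSubdiv s) = (42 : ℝ) := by
      have : (∑ s : Fin 3 → Fin 6, |α s| * dSubdiv s)
          = ((∑ s : Fin 3 → Fin 6, |aZ (s 0) (s 1) (s 2)| * dB (s 0) (s 1) (s 2) : ℤ) : ℝ) := by
        rw [Int.cast_sum]
        refine Finset.sum_congr rfl fun s _ => ?_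
        rw [dCast]
        push_cast [Int.cast_abs]
        rfl
      rw [this, aZ_total]
      norm_num
    rw [hL, hR] at hineq
    norm_num [Nat.factorial] at hineq
end

section
/- For every integer k ≥ 2, the apex extension of a pseudo k-metric space is a pseudo (k+1)-metric space: if (X, d) is a pseudo k-metric space, a ∉ X, and (X′, d′) is the apex extension of (X, d) with apex a, then (X′, d′) satisfies nonnegativity, vanishing on non-distinct tuples, permutation invariance, and the simplex inequality for (k+1)-tuples. -/
open scoped BigOperators

/-!
Every injective tuple containing the apex `none` is `Fin.insertNth i none (some ∘ z)` with `z`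
injective, and `apexExt d` takes the value `d z` there; since `d` vanishes on non-injective tuples,
this holds for every `z`. Permuting the tuple only reorders `z`, which `d` does not see. In the simplex
inequality at such a tuple, replacing the apex by `some b` gives a nonnegative term and replacing
`some (z j)` by `some b` gives `d (update z j b)`, so the simplex inequality of `d` at `z` and `b`
suffices; if the new entry is the apex itself, the term at the apex position is the tuple itself.
-/

open Function

lemma eq_of_range_eq_of_comp_perm {X : Type*} {K : ℕ} {f : (Fin K → X) → ℝ}
    (hf : ∀ (π : Equiv.Perm (Fin K)) (x), f (x ∘ π) = f x)
    {s t : Fin K → X} (hs : Injective s) (ht : Injective t)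
    (h : Set.range s = Set.range t) : f s = f t := by
  let e : Equiv.Perm (Fin K) :=
    (Equiv.ofInjective s hs).trans ((Equiv.setCongr h).trans (Equiv.ofInjective t ht).symm)
  have he : t ∘ e = s := by
    funext j
    show t ((Equiv.ofInjective t ht).symm (Equiv.setCongr h (Equiv.ofInjective s hs j))) = s j
    rw [Equiv.apply_ofInjective_symm ht]
    rfl
  rw [← he, hf e t]

namespace Fin

lemma insertNth_injective_iff {α : Type*} {n : ℕ} {p : Fin (n + 1)} {a : α} {x : Fin n → α} :
    Injective (p.insertNth a x) ↔ a ∉ Set.range x ∧ Injective x := by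
  rw [← EquivLike.injective_comp p.cycleRange.symm, insertNth_comp_cycleRange_symm,
    cons_injective_iff]

lemma exists_eq_insertNth_none {X : Type*} {K : ℕ} {x : Fin (K + 1) → Option X}
    (hx : Injective x) {i : Fin (K + 1)} (hi : x i = none) :
    ∃ z : Fin K → X, Injective z ∧ x = i.insertNth none (some ∘ z) := by
  have hsome : ∀ j, ∃ b, x (i.succAbove j) = some b := fun j =>
    Option.ne_none_iff_exists'.mp fun h => succAbove_ne i j (hx (h.trans hi.symm))
  choose z hz using hsome
  have hremove : i.removeNth x = some ∘ z := funext hz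
  refine ⟨z, Injective.of_comp (f := some) ?_, ?_⟩
  · rw [← hremove]
    exact hx.comp (succAbove_right_injective (p := i))
  · rw [← hi, ← hremove, insertNth_self_removeNth]

lemma preimage_some_range_insertNth_none {X : Type*} {K : ℕ} (i : Fin (K + 1)) (z : Fin K → X) :
    some ⁻¹' Set.range (i.insertNth none (some ∘ z)) = Set.range z := by
  ext b
  simp [Set.insert]

end Fin

section ApexExtension

variable {X : Type*} {K : ℕ} {d : (Fin K → X) → ℝ}

lemma apexExt_nonneg (hd : ∀ z, 0 ≤ d z) (x : Fin (K + 1) → Option X) :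
    0 ≤ apexExt d x := by
  unfold apexExt
  split
  · exact hd _
  · exact le_rfl

lemma apexExt_eq_zero (x : Fin (K + 1) → Option X)
    (hx : ¬(Injective x ∧ ∃ i, x i = none)) : apexExt d x = 0 := by
  rw [apexExt, dif_neg hx]

lemma apexExt_insertNth (hd : ∀ z, ¬Injective z → d z = 0) (i : Fin (K + 1))
    (z : Fin K → X) : apexExt d (i.insertNth none (some ∘ z)) = d z := by
  by_cases hz : Injective z
  · set x : Fin (K + 1) → Option X := i.insertNth none (some ∘ z) with hx_def
    have hx : Injective x :=
      Fin.insertNth_injective_iff.mpr ⟨by simp, (Option.some_injective X).comp hz⟩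
    have hxi : x i = none := Fin.insertNth_apply_same _ _ _
    have h : Injective x ∧ ∃ j, x j = none := ⟨hx, i, hxi⟩
    have hi : Classical.choose h.2 = i := hx ((Classical.choose_spec h.2).trans hxi.symm)
    rw [apexExt, dif_pos h]
    congr 1
    funext j
    apply Option.some_injective
    rw [Option.some_get, hi, hx_def, Fin.insertNth_apply_succAbove]
    rfl
  · rw [hd z hz]
    refine apexExt_eq_zero _ fun ⟨hx, _⟩ => hz ?_
    exact (Fin.insertNth_injective_iff.mp hx).2.of_comp

lemma apexExt_comp_perm (hd : ∀ z, ¬Injective z → d z = 0)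
    (hperm : ∀ (π : Equiv.Perm (Fin K)) (z), d (z ∘ π) = d z)
    (π : Equiv.Perm (Fin (K + 1))) (x : Fin (K + 1) → Option X) :
    apexExt d (x ∘ π) = apexExt d x := by
  by_cases h : Injective x ∧ ∃ i, x i = none
  · obtain ⟨hx, i, hi⟩ := h
    obtain ⟨z, hz, rfl⟩ := Fin.exists_eq_insertNth_none hx hi
    obtain ⟨z', hz', hz'_eq⟩ :=
      Fin.exists_eq_insertNth_none (hx.comp π.injective) (i := π.symm i) (by simp)
    rw [hz'_eq, apexExt_insertNth hd, apexExt_insertNth hd]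
    refine eq_of_range_eq_of_comp_perm hperm hz' hz ?_
    rw [← Fin.preimage_some_range_insertNth_none (π.symm i) z', ← hz'_eq,
      π.surjective.range_comp, Fin.preimage_some_range_insertNth_none]
  · rw [apexExt_eq_zero x h]
    refine apexExt_eq_zero _ fun ⟨hxπ, i, hi⟩ => h ⟨?_, π i, hi⟩
    exact (EquivLike.injective_comp π x).mp hxπ

lemma apexExt_le_sum_update (hd_nonneg : ∀ z, 0 ≤ d z) (hd : ∀ z, ¬Injective z → d z = 0)
    (hsimplex : ∀ (z : Fin K → X) (b : X), d z ≤ ∑ j, d (update z j b))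
    (x : Fin (K + 1) → Option X) (y : Option X) :
    apexExt d x ≤ ∑ i, apexExt d (update x i y) := by
  have hterm_nonneg : ∀ i, 0 ≤ apexExt d (update x i y) := fun i => apexExt_nonneg hd_nonneg _
  by_cases h : Injective x ∧ ∃ i, x i = none
  swap
  · rw [apexExt_eq_zero x h]
    exact Finset.sum_nonneg fun i _ => hterm_nonneg i
  obtain ⟨hx, i, hi⟩ := h
  obtain ⟨z, -, rfl⟩ := Fin.exists_eq_insertNth_none hx hi
  rw [apexExt_insertNth hd]
  cases y with
  | none =>
    calc d z = apexExt d (update (i.insertNth none (some ∘ z)) i none) := by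
          rw [Fin.update_insertNth, apexExt_insertNth hd]
      _ ≤ _ := Finset.single_le_sum (fun j _ => hterm_nonneg j) (Finset.mem_univ i)
  | some b =>
    calc d z ≤ ∑ j, d (update z j b) := hsimplex z b
      _ = ∑ j, apexExt d (update (i.insertNth none (some ∘ z)) (i.succAbove j) (some b)) := by
          refine Finset.sum_congr rfl fun j _ => ?_
          rw [← Fin.insertNth_update, ← comp_update, apexExt_insertNth hd]
      _ ≤ apexExt d (update (i.insertNth none (some ∘ z)) i (some b)) +
            ∑ j, apexExt d (update (i.insertNth none (some ∘ z)) (i.succAbove j) (some b)) :=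
          le_add_of_nonneg_left (hterm_nonneg i)
      _ = _ := (Fin.sum_univ_succAbove (fun i' => apexExt d (update _ i' (some b))) i).symm

end ApexExtension

theorem IsPseudoMetric.apexExt {X : Type*} {K : ℕ} {d : (Fin K → X) → ℝ}
    (hd : IsPseudoMetric K d) : IsPseudoMetric (K + 1) (_root_.apexExt d) where
  nonneg := apexExt_nonneg hd.nonneg
  eq_zero x hx := apexExt_eq_zero x fun h => hx h.1
  perm := apexExt_comp_perm hd.eq_zero hd.perm
  simplex := apexExt_le_sum_update hd.nonneg hd.eq_zero hd.simplex

theorem stmt_4_general (k : ℕ) {X : Type*} (d : (Fin (k + 2) → X) → ℝ)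
    (hd : IsPseudoMetric (k + 2) d) :
    IsPseudoMetric (k + 3) (apexExt d) :=
  hd.apexExt

/-- for every `k ≥ 2` (arity `k + 2`), the apex extension of a pseudo
metric is a pseudo metric of one higher arity. -/
theorem stmt_4 (k : ℕ) {X : Type*} [Fintype X] (d : (Fin (k + 2) → X) → ℝ)
    (hd : IsPseudoMetric (k + 2) d) :
    IsPseudoMetric (k + 3) (apexExt d) :=
  stmt_4_general k d hd
end

section
/- Let k ≥ 2 and m ≥ 1 be integers, let ‖·‖ be any norm on ℝ^m, let (X, d) be a pseudo k-metric space, and let (X′, d′) be the apex extension of (X, d) with apex a ∉ X. Then (X′, d′) ∈ C_{k+1,‖·‖}^m if and only if (X, d) ∈ C_{k,‖·‖}^m. -/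
open scoped BigOperators

/-!
The apex is `none : Option X`. If chains `g` realize `d′`, then `d′` vanishes on tuples avoiding
the apex, so the restriction of `g` to `X` is a cocycle, hence the coboundary of its cone
`g (b, ·)` at any `b : X`. The identity `δg (none, w) = g w - δ(g (none, ·)) w` then shows that
the cone minus the link `g (none, ·)` realizes `d`. Conversely, if `f` realizes `d`, then `δf`
extended by zero realizes `d′`: on a tuple through the apex only the face opposite the apex
survives, giving `±δf`, and on a tuple avoiding it the coboundary is `δδf = 0`.
-/

open Equiv Equiv.Perm Function

section Permutations

variable {n : ℕ} {Y : Type*}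

lemma intCast_sign_mul_self (σ : Perm (Fin n)) :
    ((sign σ : ℤ) : ℝ) * ((sign σ : ℤ) : ℝ) = 1 := by
  rw [← Int.cast_mul, ← Units.val_mul, Int.units_mul_self, Units.val_one, Int.cast_one]

lemma cons_comp_decomposeFin_symm_zero (a : Y) (u : Fin n → Y) (σ : Perm (Fin n)) :
    Fin.cons a u ∘ ⇑(decomposeFin.symm (0, σ)) = Fin.cons a (u ∘ σ) := by
  funext i
  refine Fin.cases ?_ (fun i => ?_) i <;> simp [decomposeFin_symm_apply_succ]

lemma sum_sign_mul_comp_perm (H : (Fin n → Y) → ℝ) (π : Perm (Fin n)) (x : Fin n → Y) :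
    ∑ ρ : Perm (Fin n), ((sign ρ : ℤ) : ℝ) * H ((x ∘ π) ∘ ρ)
      = ((sign π : ℤ) : ℝ) * ∑ ρ : Perm (Fin n), ((sign ρ : ℤ) : ℝ) * H (x ∘ ρ) := by
  rw [Finset.mul_sum]
  refine Fintype.sum_equiv (Equiv.mulLeft π) _ _ fun ρ => ?_
  rw [coe_mulLeft, Perm.sign_mul, Units.val_mul, Int.cast_mul, ← mul_assoc, ← mul_assoc,
    intCast_sign_mul_self, one_mul, coe_mul]
  rfl

end Permutations

section Chains

variable {Y X : Type*}

lemma AltChain.eq_zero_of_not_injective {j : ℕ} {α : (Fin j → Y) → ℝ} (hα : AltChain α)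
    {x : Fin j → Y} (hx : ¬ Injective x) : α x = 0 := by
  obtain ⟨a, b, hab, hne⟩ : ∃ a b, x a = x b ∧ a ≠ b := by
    simpa [Injective] using hx
  have hswap : x ∘ swap a b = x := by
    funext t
    rcases eq_or_ne t a with rfl | hta
    · simp [hab]
    rcases eq_or_ne t b with rfl | htb
    · simp [hab]
    · simp [swap_apply_of_ne_of_ne hta htb]
  have := hα (swap a b) x
  rw [hswap, sign_swap hne] at this
  push_cast at this
  linarith

lemma altChain_sub {j : ℕ} {α β : (Fin j → Y) → ℝ} (hα : AltChain α) (hβ : AltChain β) :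
    AltChain (fun x => α x - β x) := by
  intro π x
  dsimp only
  rw [hα π x, hβ π x, mul_sub]

lemma altChain_pullback {j : ℕ} {α : (Fin j → Y) → ℝ} (hα : AltChain α) (T : X → Y) :
    AltChain (fun u : Fin j → X => α (T ∘ u)) :=
  fun π u => hα π (T ∘ u)

lemma altChain_cons {j : ℕ} {β : (Fin (j + 1) → Y) → ℝ} (hβ : AltChain β) (a : Y) :
    AltChain (fun u : Fin j → Y => β (Fin.cons a u)) := by
  intro π u
  dsimp only
  rw [← cons_comp_decomposeFin_symm_zero, hβ]
  simp

lemma factorial_mul_cobdry {j : ℕ} {f : (Fin (j + 1) → Y) → ℝ} (hf : AltChain f)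
    (x : Fin (j + 2) → Y) :
    ((j + 1).factorial : ℝ) * cobdry f x
      = ∑ ρ : Perm (Fin (j + 2)), ((sign ρ : ℤ) : ℝ) * f (x ∘ ρ ∘ Fin.succ) := by
  -- `ρ` with `ρ 0 = l` is `l.cycleRange⁻¹` (of sign `(-1)^l`) times a permutation fixing `0`
  set Φ : Fin (j + 2) × Perm (Fin (j + 1)) → Perm (Fin (j + 2)) :=
    fun p => p.1.cycleRange⁻¹ * decomposeFin.symm (0, p.2) with hΦ
  have hΦ_bij : Bijective Φ := by
    refine (Fintype.bijective_iff_injective_and_card Φ).2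
      ⟨?_, by simp [Fintype.card_perm, Nat.factorial_succ]⟩
    rintro ⟨l, σ⟩ ⟨l', σ'⟩ h
    obtain rfl : l = l' := by simpa [Φ] using congr($h 0)
    simpa [Φ] using h
  have hterm : ∀ p, ((sign (Φ p) : ℤ) : ℝ) * f (x ∘ Φ p ∘ Fin.succ)
      = (-1) ^ (p.1 : ℕ) * f (x ∘ p.1.succAbove) := by
    rintro ⟨l, σ⟩
    have hcomp : x ∘ Φ (l, σ) ∘ Fin.succ = (x ∘ l.succAbove) ∘ σ := by
      funext t
      simp [Φ, decomposeFin_symm_apply_succ, Fin.cycleRange_symm_succ]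
    rw [hcomp, hf, hΦ]
    simp only [Perm.sign_mul, sign_inv, Fin.sign_cycleRange, decomposeFin.symm_sign]
    push_cast
    linear_combination (-1 : ℝ) ^ (l : ℕ) * f (x ∘ l.succAbove) * intCast_sign_mul_self σ
  rw [← Fintype.sum_bijective Φ hΦ_bij _ _ fun p => rfl, Fintype.sum_prod_type]
  simp only [hterm, Finset.sum_const, Finset.card_univ, Fintype.card_perm, Fintype.card_fin,
    nsmul_eq_mul, cobdry, Finset.mul_sum]

lemma altChain_cobdry {j : ℕ} {f : (Fin (j + 1) → Y) → ℝ} (hf : AltChain f) :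
    AltChain (cobdry f) := by
  intro π x
  apply mul_left_cancel₀ (by positivity : ((j + 1).factorial : ℝ) ≠ 0)
  rw [factorial_mul_cobdry hf, mul_left_comm, factorial_mul_cobdry hf]
  exact sum_sign_mul_comp_perm (fun z => f (z ∘ Fin.succ)) π x

lemma cobdry_cobdry {j : ℕ} (f : (Fin (j + 1) → Y) → ℝ) (x : Fin (j + 3) → Y) :
    cobdry (cobdry f) x = 0 := by
  have hexpand : cobdry (cobdry f) x = ∑ p : Fin (j + 3) × Fin (j + 2),
      (-1 : ℝ) ^ ((p.1 : ℕ) + p.2) * f (x ∘ p.1.succAbove ∘ p.2.succAbove) := by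
    simp only [cobdry, Finset.mul_sum, Fintype.sum_prod_type, pow_add, mul_assoc]
    rfl
  rw [hexpand]
  -- faces `(i, j)` and `(i.succAbove j, j.predAbove i)` delete the same two vertices
  refine Finset.sum_ninvolution (fun p => (p.1.succAbove p.2, p.2.predAbove p.1))
    (fun p => ?_) (fun p _ h => Fin.succAbove_ne p.1 p.2 congr($h.1))
    (fun _ => Finset.mem_univ _) (fun p => ?_)
  · have hface : x ∘ (p.1.succAbove p.2).succAbove ∘ (p.2.predAbove p.1).succAbove
        = x ∘ p.1.succAbove ∘ p.2.succAbove :=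
      funext fun t => congrArg x (Fin.succAbove_succAbove_succAbove_predAbove _ _ _)
    rw [hface, Fin.neg_one_pow_succAbove_add_predAbove]
    ring
  · exact Prod.ext (Fin.succAbove_succAbove_predAbove _ _) (Fin.predAbove_predAbove_succAbove _ _)

lemma cobdry_cons {j : ℕ} (β : (Fin (j + 2) → Y) → ℝ) (a : Y) (w : Fin (j + 2) → Y) :
    cobdry β (Fin.cons a w) = β w - cobdry (fun u => β (Fin.cons a u)) w := by
  simp only [cobdry, Fin.sum_univ_succ, Fin.succAbove_zero, Fin.cons_comp_succ,
    Fin.cons_comp_succ_succAbove, Fin.val_zero, Fin.val_succ, pow_zero, one_mul, pow_succ,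
    mul_neg_one, neg_mul, Finset.sum_neg_distrib, sub_eq_add_neg]
  rfl

lemma cobdry_sub {j : ℕ} (p q : (Fin (j + 1) → Y) → ℝ) (w : Fin (j + 2) → Y) :
    cobdry (fun u => p u - q u) w = cobdry p w - cobdry q w := by
  simp only [cobdry, mul_sub, Finset.sum_sub_distrib]

lemma eq_cobdry_of_cobdry_eq_zero {j : ℕ} {h : (Fin (j + 2) → Y) → ℝ}
    (hh : ∀ x, cobdry h x = 0) (b : Y) (w : Fin (j + 2) → Y) :
    h w = cobdry (fun u => h (Fin.cons b u)) w := by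
  linarith [cobdry_cons h b w, hh (Fin.cons b w)]

end Chains

section ExtendByZero

variable {X : Type*}

lemma exists_eq_some_comp {n : ℕ} {z : Fin n → Option X} (hz : ∀ l, z l ≠ none) :
    ∃ v : Fin n → X, z = some ∘ v := by
  choose v hv using fun l => Option.ne_none_iff_exists'.1 (hz l)
  exact ⟨v, funext hv⟩

open Classical in
noncomputable def extendByZero {n : ℕ} (F : (Fin n → X) → ℝ) : (Fin n → Option X) → ℝ :=
  fun z => if h : ∃ v, z = some ∘ v then F h.choose else 0

lemma extendByZero_some_comp {n : ℕ} (F : (Fin n → X) → ℝ) (v : Fin n → X) :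
    extendByZero F (some ∘ v) = F v := by
  have h : ∃ v', some ∘ v = some ∘ v' := ⟨v, rfl⟩
  rw [extendByZero, dif_pos h, ← Option.some_injective X |>.comp_left h.choose_spec]

lemma extendByZero_of_eq_none {n : ℕ} (F : (Fin n → X) → ℝ) {z : Fin n → Option X} {l : Fin n}
    (hl : z l = none) : extendByZero F z = 0 := by
  rw [extendByZero, dif_neg]
  rintro ⟨v, rfl⟩
  simp at hl

lemma altChain_extendByZero {n : ℕ} {F : (Fin n → X) → ℝ} (hF : AltChain F) :
    AltChain (extendByZero F) := by
  intro π z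
  by_cases hz : ∀ l, z l ≠ none
  · obtain ⟨v, rfl⟩ := exists_eq_some_comp hz
    exact (extendByZero_some_comp F (v ∘ π)).trans (by rw [hF, extendByZero_some_comp])
  · obtain ⟨l, hl⟩ := not_forall_not.1 hz
    rw [extendByZero_of_eq_none F hl, extendByZero_of_eq_none F (l := π.symm l) (by simpa),
      mul_zero]

lemma cobdry_extendByZero_some_comp {j : ℕ} (F : (Fin (j + 1) → X) → ℝ)
    (v : Fin (j + 2) → X) : cobdry (extendByZero F) (some ∘ v) = cobdry F v :=
  Finset.sum_congr rfl fun l _ => by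
    rw [Function.comp_assoc, extendByZero_some_comp]

/-- On a tuple with `none` in position `i₀`, only the face opposite `i₀` avoids `none`. -/
lemma cobdry_extendByZero_of_eq_none {j : ℕ} (F : (Fin (j + 1) → X) → ℝ)
    {x : Fin (j + 2) → Option X} {i₀ : Fin (j + 2)} (hi₀ : x i₀ = none) {w : Fin (j + 1) → X}
    (hw : x ∘ i₀.succAbove = some ∘ w) :
    cobdry (extendByZero F) x = (-1) ^ (i₀ : ℕ) * F w := by
  rw [cobdry, Finset.sum_eq_single i₀ (fun l _ hl => ?_) (by simp), hw, extendByZero_some_comp]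
  obtain ⟨t, ht⟩ := Fin.exists_succAbove_eq (Ne.symm hl)
  rw [extendByZero_of_eq_none F (l := t) (by rw [comp_apply, ht, hi₀]), mul_zero]

end ExtendByZero

section Apex

variable {X : Type*} {K : ℕ}

lemma apexExt_eq {d : (Fin K → X) → ℝ} {x : Fin (K + 1) → Option X} (hx : Injective x)
    {i₀ : Fin (K + 1)} (hi₀ : x i₀ = none) {w : Fin K → X} (hw : x ∘ i₀.succAbove = some ∘ w) :
    apexExt d x = d w := by
  have h : Injective x ∧ ∃ i, x i = none := ⟨hx, i₀, hi₀⟩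
  have hchoose : Classical.choose h.2 = i₀ := hx ((Classical.choose_spec h.2).trans hi₀.symm)
  rw [apexExt, dif_pos h]
  congr 1
  funext t
  apply Option.some_injective
  simp only [Option.some_get, hchoose]
  exact congrFun hw t

lemma apexExt_some_comp (d : (Fin K → X) → ℝ) (v : Fin (K + 1) → X) :
    apexExt d (some ∘ v) = 0 := by
  rw [apexExt, dif_neg]
  simp

lemma apexExt_of_not_injective (d : (Fin K → X) → ℝ) {x : Fin (K + 1) → Option X}
    (hx : ¬ Injective x) : apexExt d x = 0 := by
  rw [apexExt, dif_neg (fun h => hx h.1)]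

end Apex

section CoboundaryMetric

variable {k m : ℕ} {ν : (Fin m → ℝ) → ℝ} {X : Type*}

theorem isCoboundaryMetric_apexExt (hν : IsNorm ν) {d : (Fin (k + 2) → X) → ℝ}
    (hd : IsCoboundaryMetric k m ν d) : IsCoboundaryMetric (k + 1) m ν (apexExt d) := by
  obtain ⟨f, hf, hfd, -⟩ := hd
  refine ⟨fun i => extendByZero (cobdry (f i)),
    fun i => altChain_extendByZero (altChain_cobdry (hf i)), fun x hx => ?_,
    fun x hx => apexExt_of_not_injective d hx⟩
  by_cases hapex : ∃ i₀, x i₀ = none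
  · obtain ⟨i₀, hi₀⟩ := hapex
    obtain ⟨w, hw⟩ := exists_eq_some_comp (z := x ∘ i₀.succAbove)
      fun t h => Fin.succAbove_ne i₀ t (hx (h.trans hi₀.symm))
    have hw_inj : Injective w := by
      have := hx.comp (Fin.succAbove_right_injective (p := i₀))
      rw [hw] at this
      exact this.of_comp
    have hsign : (fun i => cobdry (extendByZero (cobdry (f i))) x)
        = ((-1 : ℝ) ^ (i₀ : ℕ)) • fun i => cobdry (f i) w := by
      funext i
      rw [cobdry_extendByZero_of_eq_none _ hi₀ hw, Pi.smul_apply, smul_eq_mul]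
    rw [apexExt_eq hx hi₀ hw, hfd w hw_inj, hsign, hν.homog, abs_neg_one_pow, one_mul]
  · obtain ⟨v, rfl⟩ := exists_eq_some_comp (not_exists.1 hapex)
    simp only [apexExt_some_comp, cobdry_extendByZero_some_comp, cobdry_cobdry]
    exact ((hν.eq_zero_iff 0).2 rfl).symm

theorem isCoboundaryMetric_of_apexExt (hν : IsNorm ν) {d : (Fin (k + 2) → X) → ℝ}
    (hd : ∀ x, ¬ Injective x → d x = 0) (h : IsCoboundaryMetric (k + 1) m ν (apexExt d)) :
    IsCoboundaryMetric k m ν d := by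
  obtain ⟨g, hg, hgd, -⟩ := h
  rcases isEmpty_or_nonempty X with hX | ⟨⟨b⟩⟩
  · exact ⟨0, fun _ _ x => isEmptyElim (x 0), fun x => isEmptyElim (x 0), hd⟩
  have hcocycle : ∀ i (v : Fin (k + 3) → X), cobdry (g i) (some ∘ v) = 0 := by
    intro i v
    by_cases hv : Injective (some ∘ v)
    · have hzero := hgd _ hv
      rw [apexExt_some_comp] at hzero
      exact congrFun ((hν.eq_zero_iff _).1 hzero.symm) i
    · exact (altChain_cobdry (hg i)).eq_zero_of_not_injective hv
  refine ⟨fun i u => g i (some ∘ Fin.cons b u) - g i (Fin.cons none (some ∘ u)),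
    fun i => altChain_sub (altChain_cons (altChain_pullback (hg i) some) b)
      (altChain_pullback (altChain_cons (hg i) none) some), fun w hw => ?_, hd⟩
  have hx : Injective (Fin.cons none (some ∘ w) : Fin (k + 3) → Option X) :=
    Fin.cons_injective_iff.2 ⟨by simp, (Option.some_injective X).comp hw⟩
  have hface : ∀ i, cobdry (g i) (Fin.cons none (some ∘ w))
      = cobdry (fun u => g i (some ∘ Fin.cons b u) - g i (Fin.cons none (some ∘ u))) w := by
    intro i
    rw [cobdry_cons, cobdry_sub,
      eq_cobdry_of_cobdry_eq_zero (h := fun v => g i (some ∘ v)) (hcocycle i) b w]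
    rfl
  have hlink : apexExt d (Fin.cons none (some ∘ w)) = d w :=
    apexExt_eq hx (i₀ := 0) rfl (by rw [Fin.succAbove_zero, Fin.cons_comp_succ])
  rw [← hlink, hgd _ hx]
  exact congrArg ν (funext hface)

end CoboundaryMetric

theorem stmt_5_general (k m : ℕ) (ν : (Fin m → ℝ) → ℝ) (hν : IsNorm ν)
    {X : Type*} (d : (Fin (k + 2) → X) → ℝ)
    (hd : IsPseudoMetric (k + 2) d) :
    IsCoboundaryMetric (k + 1) m ν (apexExt d) ↔ IsCoboundaryMetric k m ν d :=
  ⟨isCoboundaryMetric_of_apexExt hν hd.eq_zero, isCoboundaryMetric_apexExt hν⟩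

/-- for `k ≥ 2` (arity `k + 2`), `m ≥ 1` and any norm `ν` on `ℝ^m`,
if `(X, d)` is a pseudo metric, then its apex extension is a coboundary metric of
arity `k + 3` in `m` dimensions w.r.t. `ν` iff `(X, d)` is a coboundary metric of
arity `k + 2` in `m` dimensions w.r.t. `ν`. -/
theorem stmt_5 (k m : ℕ) (hm : 1 ≤ m) (ν : (Fin m → ℝ) → ℝ) (hν : IsNorm ν)
    {X : Type*} [Fintype X] (d : (Fin (k + 2) → X) → ℝ)
    (hd : IsPseudoMetric (k + 2) d) :
    IsCoboundaryMetric (k + 1) m ν (apexExt d) ↔ IsCoboundaryMetric k m ν d :=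
  stmt_5_general k m ν hν d hd
end
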